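/- arXiv:1903.10001 — 2 statements merged into one kernel-verified Lean document; each statement's English description precedes it below -/
import Mathlib

section
/- Let (X, D) be an F-metric space with associated pair (f, α), and let d be the associated metric on X. Then a subset A ⊆ X is F-compact (compact in the topology τ_F) if and only if A is compact with respect to the metric d. -/
open Filter Topology

universe u v

/-- `(X, D)` is an `F`-metric space with associated pair `(f, α)`:
`f` is non-decreasing on `(0, ∞)` (F1), `f(tₙ) → -∞` iff `tₙ → 0` for positive
sequences (F2), `α ≥ 0`, `D` is nonnegative and satisfies (D1), (D2), (D3). -/
structure IsFMetric {X : Type v} (D : X → X → ℝ) (f : ℝ → ℝ) (α : ℝ) : Prop where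
  nonneg : ∀ x y : X, 0 ≤ D x y
  alpha_nonneg : 0 ≤ α
  f_mono : ∀ s t : ℝ, 0 < s → s < t → f s ≤ f t
  f_tendsto : ∀ t : ℕ → ℝ, (∀ n, 0 < t n) →
      (Tendsto t atTop (nhds 0) ↔ Tendsto (fun n => f (t n)) atTop atBot)
  eq_iff : ∀ x y : X, D x y = 0 ↔ x = y
  symm : ∀ x y : X, D x y = D y x
  ineq : ∀ x y : X, ∀ N : ℕ, 2 ≤ N → ∀ u : ℕ → X, u 0 = x → u (N - 1) = y →
      0 < D x y →
      f (D x y) ≤ f (∑ i ∈ Finset.range (N - 1), D (u i) (u (i + 1))) + α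

/-- The associated metric `d(x,y) = inf { Σ_{i<N-1} D(uᵢ, uᵢ₊₁) : N ≥ 2, u₀ = x, u_{N-1} = y }`. -/
noncomputable def assocDist {X : Type v} (D : X → X → ℝ) (x y : X) : ℝ :=
  sInf { s : ℝ | ∃ N : ℕ, 2 ≤ N ∧ ∃ u : ℕ → X, u 0 = x ∧ u (N - 1) = y ∧
    s = ∑ i ∈ Finset.range (N - 1), D (u i) (u (i + 1)) }

/-- The ball `B_ρ(x, ε) = { y : ρ(x,y) < ε }` for a distance-like function `ρ`. -/
def ballWrt {X : Type v} (ρ : X → X → ℝ) (x : X) (ε : ℝ) : Set X := { y | ρ x y < ε }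

/-- `U` is open w.r.t. `ρ`: every point of `U` has a `ρ`-ball around it inside `U`. -/
def IsOpenWrt {X : Type v} (ρ : X → X → ℝ) (U : Set X) : Prop :=
  ∀ x ∈ U, ∃ ε > 0, ballWrt ρ x ε ⊆ U

/-- `C` is closed w.r.t. `ρ`: its complement is open w.r.t. `ρ`. -/
def IsClosedWrt {X : Type v} (ρ : X → X → ℝ) (C : Set X) : Prop := IsOpenWrt ρ Cᶜ

/-- A sequence is Cauchy w.r.t. `ρ`: `ρ(xₙ, xₘ) → 0` as `n, m → ∞`. -/
def IsCauchyWrt {X : Type v} (ρ : X → X → ℝ) (x : ℕ → X) : Prop :=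
  ∀ ε > 0, ∃ N : ℕ, ∀ m, N ≤ m → ∀ n, N ≤ n → ρ (x m) (x n) < ε

/-- A sequence converges to `l` w.r.t. `ρ`: `ρ(xₙ, l) → 0` as `n → ∞`. -/
def ConvergesWrt {X : Type v} (ρ : X → X → ℝ) (x : ℕ → X) (l : X) : Prop :=
  Tendsto (fun n => ρ (x n) l) atTop (nhds 0)

/-- `X` is complete w.r.t. `ρ`: every Cauchy sequence converges. -/
def IsCompleteWrt {X : Type v} (ρ : X → X → ℝ) : Prop :=
  ∀ x : ℕ → X, IsCauchyWrt ρ x → ∃ l : X, ConvergesWrt ρ x l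

/-- The diameter of `A` w.r.t. `ρ`: `sup { ρ(x,y) : x, y ∈ A }`. -/
noncomputable def diamWrt {X : Type v} (ρ : X → X → ℝ) (A : Set X) : ℝ :=
  sSup { r : ℝ | ∃ x ∈ A, ∃ y ∈ A, r = ρ x y }

/-- `A` is bounded w.r.t. `ρ`: there is `M > 0` with `ρ(x,y) ≤ M` for all `x, y ∈ A`. -/
def IsBoundedWrt {X : Type v} (ρ : X → X → ℝ) (A : Set X) : Prop :=
  ∃ M > 0, ∀ x ∈ A, ∀ y ∈ A, ρ x y ≤ M

/-- `A` is totally bounded w.r.t. `ρ`: for every `ε > 0` finitely many `ρ`-balls of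
radius `ε` centered at points of `A` cover `A`. -/
def IsTotallyBoundedWrt {X : Type v} (ρ : X → X → ℝ) (A : Set X) : Prop :=
  ∀ ε > 0, ∃ t : Finset X, ↑t ⊆ A ∧ A ⊆ ⋃ a ∈ t, ballWrt ρ a ε

/-- `A` is compact w.r.t. `ρ`: every cover of `A` by `ρ`-open sets admits a finite subcover. -/
def IsCompactWrt {X : Type v} (ρ : X → X → ℝ) (A : Set X) : Prop :=
  ∀ 𝒰 : Set (Set X), (∀ U ∈ 𝒰, IsOpenWrt ρ U) → A ⊆ ⋃₀ 𝒰 →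
    ∃ 𝒱 ⊆ 𝒰, 𝒱.Finite ∧ A ⊆ ⋃₀ 𝒱

/-! Every `D`-ball around `x` is contained in a `d`-ball around `x` of the same radius because
`d ≤ D`. Conversely, (F2) makes `f` arbitrarily negative near `0⁺`, so a chain from `x` to `y`
of small total length `s` with `D(x,y) ≥ ε` would give `f ε ≤ f (D x y) ≤ f s + α < f ε`
by (D3). Hence `D` and `d` define the same open sets, and therefore the same compact sets. -/

section FMetric

variable {X : Type v} {D : X → X → ℝ} {f : ℝ → ℝ} {α : ℝ}

lemma exists_pos_forall_lt_of_seq_tendsto_atBot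
    (hf : ∀ t : ℕ → ℝ, (∀ n, 0 < t n) → Tendsto t atTop (𝓝 0) →
      Tendsto (fun n => f (t n)) atTop atBot) (C : ℝ) :
    ∃ δ > 0, ∀ t, 0 < t → t < δ → f t < C := by
  by_contra! h
  choose t ht_pos ht_lt ht_ge using fun n : ℕ => h (1 / (n + 1 : ℝ)) (by positivity)
  have ht : Tendsto t atTop (𝓝 0) :=
    squeeze_zero (fun n => (ht_pos n).le) (fun n => (ht_lt n).le)
      tendsto_one_div_add_atTop_nhds_zero_nat
  obtain ⟨n, hn⟩ := ((hf t ht_pos ht).eventually (eventually_lt_atBot C)).exists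
  exact (ht_ge n).not_gt hn

lemma sum_chain_pos (hD_nonneg : ∀ x y, 0 ≤ D x y) (hD_pos : ∀ x y, x ≠ y → 0 < D x y)
    {u : ℕ → X} {n : ℕ} (hu : u 0 ≠ u n) :
    0 < ∑ i ∈ Finset.range n, D (u i) (u (i + 1)) := by
  induction n with
  | zero => exact absurd rfl hu
  | succ n ih =>
    rw [Finset.sum_range_succ]
    by_cases h : u 0 = u n
    · exact add_pos_of_nonneg_of_pos (Finset.sum_nonneg fun i _ => hD_nonneg _ _)
        (hD_pos _ _ (h ▸ hu))
    · exact add_pos_of_pos_of_nonneg (ih h) (hD_nonneg _ _)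

lemma self_mem_chainLengths (D : X → X → ℝ) (x y : X) :
    D x y ∈ { s : ℝ | ∃ N : ℕ, 2 ≤ N ∧ ∃ u : ℕ → X, u 0 = x ∧ u (N - 1) = y ∧
      s = ∑ i ∈ Finset.range (N - 1), D (u i) (u (i + 1)) } :=
  ⟨2, le_rfl, fun i => if i = 0 then x else y, by simp, by simp, by simp⟩

lemma assocDist_le (hD_nonneg : ∀ x y, 0 ≤ D x y) (x y : X) : assocDist D x y ≤ D x y := by
  refine csInf_le ⟨0, ?_⟩ (self_mem_chainLengths D x y)
  rintro _ ⟨N, -, u, -, -, rfl⟩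
  exact Finset.sum_nonneg fun i _ => hD_nonneg _ _

namespace IsFMetric

lemma pos_of_ne (hD : IsFMetric D f α) {x y : X} (h : x ≠ y) : 0 < D x y :=
  (hD.nonneg x y).lt_of_ne fun h0 => h ((hD.eq_iff x y).1 h0.symm)

lemma f_le_of_le (hD : IsFMetric D f α) {s t : ℝ} (hs : 0 < s) (hst : s ≤ t) : f s ≤ f t :=
  hst.eq_or_lt.elim (fun h => h ▸ le_rfl) (hD.f_mono s t hs)

lemma exists_pos_lt_of_assocDist_lt (hD : IsFMetric D f α) {ε : ℝ} (hε : 0 < ε) :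
    ∃ δ > 0, ∀ x y, assocDist D x y < δ → D x y < ε := by
  obtain ⟨δ, hδ, hf_lt⟩ := exists_pos_forall_lt_of_seq_tendsto_atBot
    (fun t ht => (hD.f_tendsto t ht).1) (f ε - α)
  refine ⟨δ, hδ, fun x y hxy => ?_⟩
  obtain ⟨_, ⟨N, hN, u, rfl, rfl, rfl⟩, hsum_lt⟩ :=
    exists_lt_of_csInf_lt ⟨_, self_mem_chainLengths D x y⟩ hxy
  by_contra! hεD
  have hD_pos : 0 < D (u 0) (u (N - 1)) := hε.trans_le hεD
  have hsum_pos := sum_chain_pos hD.nonneg (fun _ _ => hD.pos_of_ne)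
    (fun h => hD_pos.ne' ((hD.eq_iff _ _).2 h))
  have h_chain := hD.ineq _ _ N hN u rfl rfl hD_pos
  linarith [hf_lt _ hsum_pos hsum_lt, hD.f_le_of_le hε hεD]

lemma isOpenWrt_assocDist_iff (hD : IsFMetric D f α) (U : Set X) :
    IsOpenWrt (assocDist D) U ↔ IsOpenWrt D U := by
  constructor
  · intro hU x hx
    obtain ⟨ε, hε, hball⟩ := hU x hx
    exact ⟨ε, hε, fun y hy => hball ((assocDist_le hD.nonneg x y).trans_lt hy)⟩
  · intro hU x hx
    obtain ⟨ε, hε, hball⟩ := hU x hx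
    obtain ⟨δ, hδ, hD_lt⟩ := hD.exists_pos_lt_of_assocDist_lt hε
    exact ⟨δ, hδ, fun y hy => hball (hD_lt x y hy)⟩

end IsFMetric

end FMetric

lemma isCompactWrt_congr {X : Type v} {ρ σ : X → X → ℝ}
    (h : ∀ U, IsOpenWrt ρ U ↔ IsOpenWrt σ U) (A : Set X) :
    IsCompactWrt ρ A ↔ IsCompactWrt σ A := by
  simp only [IsCompactWrt, h]

theorem fCompact_iff_compact_assocDist_general {X : Type v} (D : X → X → ℝ)
    (f : ℝ → ℝ) (α : ℝ) (hD : IsFMetric D f α) (A : Set X) :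
    IsCompactWrt D A ↔ IsCompactWrt (assocDist D) A :=
  isCompactWrt_congr (fun U => (hD.isOpenWrt_assocDist_iff U).symm) A

/-- `A ⊆ X` is `F`-compact iff `A` is compact w.r.t. the associated
metric `d`. -/
theorem fCompact_iff_compact_assocDist {X : Type v} [Nonempty X] (D : X → X → ℝ)
    (f : ℝ → ℝ) (α : ℝ) (hD : IsFMetric D f α) (A : Set X) :
    IsCompactWrt D A ↔ IsCompactWrt (assocDist D) A :=
  fCompact_iff_compact_assocDist_general D f α hD A
end

section
/- Let (X, D) be an F-metric space with associated pair (f, α), and let d be the associated metric on X. Then A ⊆ X is F-totally bounded if and only if A is totally bounded with respect to the metric d. -/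
open Filter Topology

universe u v

/-! Every chain from `x` to `y` has `D`-length `≥ d(x, y)`, and (D3) turns a short chain into a
small value of `f (D x y)`; by (F2) `f` takes arbitrarily negative values near `0`, so for every
`ε > 0` there is `δ > 0` with `d(x, y) < δ → D(x, y) < ε`. Hence `D` and `d` are uniformly
comparable, and totally bounded sets for one are totally bounded for the other. -/

lemma IsTotallyBoundedWrt.of_uniform_comparison {X : Type v} {ρ σ : X → X → ℝ} {A : Set X}
    (hA : IsTotallyBoundedWrt ρ A) (hρσ : ∀ ε > 0, ∃ δ > 0, ∀ x y, ρ x y < δ → σ x y < ε) :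
    IsTotallyBoundedWrt σ A := by
  intro ε hε
  obtain ⟨δ, hδ, hσ⟩ := hρσ ε hε
  obtain ⟨t, htA, hcover⟩ := hA δ hδ
  exact ⟨t, htA, hcover.trans <| Set.iUnion₂_mono fun a _ y hy => hσ a y hy⟩

namespace IsFMetric

variable {X : Type v} {D : X → X → ℝ} {f : ℝ → ℝ} {α : ℝ}

lemma monotoneOn_f (hD : IsFMetric D f α) : MonotoneOn f (Set.Ioi 0) := by
  intro s hs t _ hst
  rcases hst.eq_or_lt with rfl | hlt
  · exact le_rfl
  · exact hD.f_mono s t hs hlt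

lemma exists_pos_f_lt (hD : IsFMetric D f α) (C : ℝ) : ∃ δ > 0, f δ < C := by
  have hpos : ∀ n : ℕ, (0 : ℝ) < 1 / (n + 1) := fun n => by positivity
  have hf : Tendsto (fun n : ℕ => f (1 / (n + 1))) atTop atBot :=
    (hD.f_tendsto _ hpos).1 tendsto_one_div_add_atTop_nhds_zero_nat
  obtain ⟨n, hn⟩ := (hf.eventually_lt_atBot C).exists
  exact ⟨_, hpos n, hn⟩

lemma sum_chain_pos (hD : IsFMetric D f α) (u : ℕ → X) :
    ∀ n, u 0 ≠ u n → 0 < ∑ i ∈ Finset.range n, D (u i) (u (i + 1))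
  | 0, h => absurd rfl h
  | n + 1, h => by
    have hsum_nonneg : 0 ≤ ∑ i ∈ Finset.range n, D (u i) (u (i + 1)) :=
      Finset.sum_nonneg fun i _ => hD.nonneg _ _
    rw [Finset.sum_range_succ]
    by_cases h0n : u 0 = u n
    · have hstep : 0 < D (u n) (u (n + 1)) :=
        (hD.nonneg _ _).lt_of_ne' fun h0 => h (h0n.trans ((hD.eq_iff _ _).1 h0))
      linarith
    · linarith [sum_chain_pos hD u n h0n, hD.nonneg (u n) (u (n + 1))]

lemma assocDist_le_sum (hD : IsFMetric D f α) {N : ℕ} (hN : 2 ≤ N) (u : ℕ → X) :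
    assocDist D (u 0) (u (N - 1)) ≤ ∑ i ∈ Finset.range (N - 1), D (u i) (u (i + 1)) := by
  refine csInf_le ⟨0, ?_⟩ ⟨N, hN, u, rfl, rfl, rfl⟩
  rintro _ ⟨M, -, v, -, -, rfl⟩
  exact Finset.sum_nonneg fun i _ => hD.nonneg _ _

lemma assocDist_le (hD : IsFMetric D f α) (x y : X) : assocDist D x y ≤ D x y := by
  simpa using hD.assocDist_le_sum le_rfl fun n => if n = 0 then x else y

lemma exists_chain_sum_lt_of_assocDist_lt {x y : X} {δ : ℝ} (h : assocDist D x y < δ) :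
    ∃ N, 2 ≤ N ∧ ∃ u : ℕ → X, u 0 = x ∧ u (N - 1) = y ∧
      ∑ i ∈ Finset.range (N - 1), D (u i) (u (i + 1)) < δ := by
  have hne : { s : ℝ | ∃ N : ℕ, 2 ≤ N ∧ ∃ u : ℕ → X, u 0 = x ∧ u (N - 1) = y ∧
      s = ∑ i ∈ Finset.range (N - 1), D (u i) (u (i + 1)) }.Nonempty :=
    ⟨D x y, 2, le_rfl, fun n => if n = 0 then x else y, rfl, rfl, by simp⟩
  obtain ⟨_, ⟨N, hN, u, hx, hy, rfl⟩, hlt⟩ := exists_lt_of_csInf_lt hne h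
  exact ⟨N, hN, u, hx, hy, hlt⟩

lemma lt_of_assocDist_lt (hD : IsFMetric D f α) {ε δ : ℝ} (hε : 0 < ε) (hfδ : f δ + α < f ε)
    {x y : X} (h : assocDist D x y < δ) : D x y < ε := by
  by_contra! hεD
  obtain ⟨N, hN, u, rfl, rfl, hsum⟩ := exists_chain_sum_lt_of_assocDist_lt h
  have hDpos : 0 < D (u 0) (u (N - 1)) := hε.trans_le hεD
  -- `f` is only monotone on `(0, ∞)`, so the chain needs positive length.
  have hsum_pos := hD.sum_chain_pos u (N - 1) fun heq => by
    simp [heq, (hD.eq_iff _ _).2] at hDpos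
  have := calc
    f ε ≤ f (D (u 0) (u (N - 1))) := hD.monotoneOn_f hε hDpos hεD
    _ ≤ f (∑ i ∈ Finset.range (N - 1), D (u i) (u (i + 1))) + α := hD.ineq _ _ N hN u rfl rfl hDpos
    _ ≤ f δ + α := by
      gcongr; exact hD.monotoneOn_f hsum_pos (hsum_pos.trans hsum) hsum.le
  linarith

end IsFMetric

theorem fTotallyBounded_iff_totallyBounded_assocDist_general {X : Type v}
    (D : X → X → ℝ) (f : ℝ → ℝ) (α : ℝ) (hD : IsFMetric D f α) (A : Set X) :
    IsTotallyBoundedWrt D A ↔ IsTotallyBoundedWrt (assocDist D) A := by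
  refine ⟨fun hA => hA.of_uniform_comparison fun ε hε => ?_,
    fun hA => hA.of_uniform_comparison fun ε hε => ?_⟩
  · exact ⟨ε, hε, fun x y hxy => (hD.assocDist_le x y).trans_lt hxy⟩
  · obtain ⟨δ, hδ, hfδ⟩ := hD.exists_pos_f_lt (f ε - α)
    exact ⟨δ, hδ, fun x y => hD.lt_of_assocDist_lt hε (by linarith)⟩

/-- `A` is `F`-totally bounded iff `A` is totally bounded w.r.t. the
associated metric `d`. -/
theorem fTotallyBounded_iff_totallyBounded_assocDist {X : Type v} [Nonempty X]
    (D : X → X → ℝ) (f : ℝ → ℝ) (α : ℝ) (hD : IsFMetric D f α) (A : Set X) :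
    IsTotallyBoundedWrt D A ↔ IsTotallyBoundedWrt (assocDist D) A :=
  fTotallyBounded_iff_totallyBounded_assocDist_general D f α hD A
end
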